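/- L²-bound on the influence-function perturbation: let π_n and π_0 be measurable functions on [0,1]^p with values in [c,1] for some c > 0, set γ_n(r,x) = r/π_n(x) and γ_0(r,x) = r/π_0(x), and suppose that under P_0 the conditional variance of Y − m_0(X) given X = x, R = 1 equals 1 for μ_0-a.e. x. For a measurable function m with ‖m − m_0‖_{2,μ_0} < ∞ define ϑ(z) = (1 − γ_n(r,x))(m(x) − m_0(x)) + (γ_n(r,x) − γ_0(r,x))(y − m_0(x)). Then there is a constant C depending only on c such that (E_0[ϑ(Z)²])^{1/2} ≤ C ( ‖m − m_0‖_{2,μ_0} + ‖π_n − π_0‖_{2,μ_0} + ‖m − m_0‖_{2,μ_0} ‖π_n − π_0‖_{2,μ_0} ). -/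

import Mathlib

open MeasureTheory ProbabilityTheory

/-- A point of the sample space carrying the full outcome `y`, the response indicator `r`
(taking values in `{0,1}`), and the covariates `x ∈ [0,1]^p`. -/
abbrev Zsp (p : ℕ) := ℝ × ℝ × (Fin p → ℝ)

/-- The `L²(μ₀)` norm `‖φ‖_{2,μ₀} = (∫ φ² dμ₀)^{1/2}`. -/
noncomputable def l2norm {p : ℕ} (μ₀ : Measure (Fin p → ℝ)) (φ : (Fin p → ℝ) → ℝ) : ℝ :=
  Real.sqrt (∫ x, (φ x) ^ 2 ∂μ₀)

set_option maxHeartbeats 2000000 in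
/-- **L²-bound on the influence-function perturbation.**
For every `c > 0` there is a constant `C > 0` depending only on `c` such that for all
probability models `P₀` with `R ∈ {0,1}`, propensity-type functions `π_n, π₀` with values
in `[c,1]`, conditional mean `m₀` (conditionally centered error) and unit conditional
variance of `Y − m₀(X)` given `X, R = 1`, and any measurable `m` with
`‖m − m₀‖_{2,μ₀} < ∞`, the perturbation
`ϑ(z) = (1 − γₙ(r,x))(m(x) − m₀(x)) + (γₙ(r,x) − γ₀(r,x))(y − m₀(x))`
satisfies `(E₀[ϑ²])^{1/2} ≤ C (‖m − m₀‖_{2,μ₀} + ‖πₙ − π₀‖_{2,μ₀}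
  + ‖m − m₀‖_{2,μ₀} ‖πₙ − π₀‖_{2,μ₀})`. -/
theorem perturbation_L2_bound {p : ℕ} (c : ℝ) (hc : 0 < c) :
    ∃ C : ℝ, 0 < C ∧
      ∀ (P₀ : Measure (Zsp p)), IsProbabilityMeasure P₀ →
      ∀ (μ₀ : Measure (Fin p → ℝ)), μ₀ = P₀.map (fun z : Zsp p => z.2.2) →
      ∀ (πₙ π₀ m₀ : (Fin p → ℝ) → ℝ),
        Measurable πₙ → Measurable π₀ → Measurable m₀ →
        (∀ x, πₙ x ∈ Set.Icc c 1) → (∀ x, π₀ x ∈ Set.Icc c 1) →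
        -- R takes values in {0,1} a.s.
        (∀ᵐ z ∂P₀, z.2.1 = 0 ∨ z.2.1 = 1) →
        -- m₀ is the conditional mean given X, R = 1:
        -- E₀[R (Y − m₀(X)) g(X)] = 0 for all bounded measurable g
        (∀ g : (Fin p → ℝ) → ℝ, Measurable g → (∃ M, ∀ x, |g x| ≤ M) →
          ∫ z, z.2.1 * (z.1 - m₀ z.2.2) * g z.2.2 ∂P₀ = 0) →
        -- unit conditional variance of Y − m₀(X) given X = x, R = 1 (μ₀-a.e. x):
        -- E₀[R (Y − m₀(X))² g(X)] = E₀[R g(X)] for all bounded measurable g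
        (∀ g : (Fin p → ℝ) → ℝ, Measurable g → (∃ M, ∀ x, |g x| ≤ M) →
          ∫ z, z.2.1 * (z.1 - m₀ z.2.2) ^ 2 * g z.2.2 ∂P₀
            = ∫ z, z.2.1 * g z.2.2 ∂P₀) →
        ∀ m : (Fin p → ℝ) → ℝ, Measurable m →
          MemLp (fun x => m x - m₀ x) 2 μ₀ →
          Real.sqrt (∫ z, ((1 - z.2.1 / πₙ z.2.2) * (m z.2.2 - m₀ z.2.2)
              + (z.2.1 / πₙ z.2.2 - z.2.1 / π₀ z.2.2) * (z.1 - m₀ z.2.2)) ^ 2 ∂P₀)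
            ≤ C * (l2norm μ₀ (fun x => m x - m₀ x)
                + l2norm μ₀ (fun x => πₙ x - π₀ x)
                + l2norm μ₀ (fun x => m x - m₀ x) * l2norm μ₀ (fun x => πₙ x - π₀ x)) := by
  refine ⟨2 / c ^ 4, by positivity, ?_⟩
  intro P₀ hP₀ μ₀ hμ₀ πₙ π₀ m₀ hπₙm hπ₀m hm₀m hπₙI hπ₀I hR hcond hvar m hmm hmL2
  haveI := hP₀
  subst hμ₀
  have hxm : Measurable fun z : Zsp p => z.2.2 := measurable_snd.snd
  have hrm : Measurable fun z : Zsp p => z.2.1 := measurable_snd.fst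
  haveI : IsProbabilityMeasure (P₀.map fun z : Zsp p => z.2.2) :=
    Measure.isProbabilityMeasure_map hxm.aemeasurable
  have hc1 : c ≤ 1 := le_trans (hπₙI fun _ => 0).1 (hπₙI fun _ => 0).2
  have hπₙpos : ∀ x, 0 < πₙ x := fun x => lt_of_lt_of_le hc (hπₙI x).1
  have hπ₀pos : ∀ x, 0 < π₀ x := fun x => lt_of_lt_of_le hc (hπ₀I x).1
  set g : (Fin p → ℝ) → ℝ := fun x => (1 / πₙ x - 1 / π₀ x) ^ 2 with hg_def
  have hgm : Measurable g :=
    ((measurable_const.div hπₙm).sub (measurable_const.div hπ₀m)).pow_const 2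
  have hgnn : ∀ x, 0 ≤ g x := fun x => sq_nonneg _
  have hπdiffsq1 : ∀ x, (πₙ x - π₀ x) ^ 2 ≤ 1 := by
    intro x
    have h1 := hπₙI x; have h2 := hπ₀I x
    nlinarith [h1.1, h1.2, h2.1, h2.2]
  have hgle : ∀ x, g x * c ^ 4 ≤ (πₙ x - π₀ x) ^ 2 := by
    intro x
    have h1 := hπₙI x; have h2 := hπ₀I x
    have hn := hπₙpos x; have h0 := hπ₀pos x
    have hkey : g x * (πₙ x * π₀ x) ^ 2 = (πₙ x - π₀ x) ^ 2 := by
      rw [hg_def]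
      field_simp
      ring
    have hc2 : c ^ 2 ≤ πₙ x * π₀ x := by nlinarith [h1.1, h2.1]
    have hc4 : c ^ 4 ≤ (πₙ x * π₀ x) ^ 2 := by nlinarith
    calc g x * c ^ 4 ≤ g x * (πₙ x * π₀ x) ^ 2 :=
          mul_le_mul_of_nonneg_left hc4 (hgnn x)
      _ = (πₙ x - π₀ x) ^ 2 := hkey
  have hgbd : ∀ x, |g x| ≤ 1 / c ^ 4 := by
    intro x
    rw [abs_of_nonneg (hgnn x), le_div_iff₀ (by positivity)]
    exact le_trans (hgle x) (hπdiffsq1 x)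
  have hfmm : Measurable fun x => m x - m₀ x := hmm.sub hm₀m
  have hfπm : Measurable fun x => πₙ x - π₀ x := hπₙm.sub hπ₀m
  have hfsqμ : Integrable (fun x => (m x - m₀ x) ^ 2) (P₀.map fun z : Zsp p => z.2.2) :=
    hmL2.integrable_sq
  have hπsqμ : Integrable (fun x => (πₙ x - π₀ x) ^ 2) (P₀.map fun z : Zsp p => z.2.2) := by
    refine (integrable_const (1 : ℝ)).mono' (hfπm.pow_const 2).aestronglyMeasurable ?_
    refine Filter.Eventually.of_forall fun x => ?_
    rw [Real.norm_eq_abs, abs_of_nonneg (sq_nonneg _)]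
    exact hπdiffsq1 x
  have hgμ : Integrable g (P₀.map fun z : Zsp p => z.2.2) := by
    refine (integrable_const (1 / c ^ 4 : ℝ)).mono' hgm.aestronglyMeasurable ?_
    exact Filter.Eventually.of_forall fun x => by rw [Real.norm_eq_abs]; exact hgbd x
  have hfsqP : Integrable (fun z : Zsp p => (m z.2.2 - m₀ z.2.2) ^ 2) P₀ := by
    have := (integrable_map_measure (hfmm.pow_const 2).aestronglyMeasurable
      hxm.aemeasurable).mp hfsqμ
    exact this
  have hImeq : (∫ x, (m x - m₀ x) ^ 2 ∂(P₀.map fun z : Zsp p => z.2.2))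
      = ∫ z, (m z.2.2 - m₀ z.2.2) ^ 2 ∂P₀ := by
    rw [integral_map hxm.aemeasurable (hfmm.pow_const 2).aestronglyMeasurable]
  have hgP : Integrable (fun z : Zsp p => g z.2.2) P₀ := by
    have := (integrable_map_measure hgm.aestronglyMeasurable hxm.aemeasurable).mp hgμ
    exact this
  have hgeq : (∫ x, g x ∂(P₀.map fun z : Zsp p => z.2.2)) = ∫ z, g z.2.2 ∂P₀ := by
    rw [integral_map hxm.aemeasurable hgm.aestronglyMeasurable]
  -- A part : pointwise bound and integrability
  have hAmeas : Measurable fun z : Zsp p =>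
      ((1 - z.2.1 / πₙ z.2.2) * (m z.2.2 - m₀ z.2.2)) ^ 2 :=
    ((measurable_const.sub (hrm.div (hπₙm.comp hxm))).mul (hfmm.comp hxm)).pow_const 2
  have hαb : ∀ᵐ z ∂P₀, (1 - z.2.1 / πₙ z.2.2) ^ 2 ≤ 1 / c ^ 2 := by
    filter_upwards [hR] with z hz
    have hx := hπₙI z.2.2
    have hπpos : 0 < πₙ z.2.2 := hπₙpos z.2.2
    have h1 : 1 / πₙ z.2.2 ≤ 1 / c := one_div_le_one_div_of_le hc hx.1
    have h2 : 1 ≤ 1 / πₙ z.2.2 := by rw [le_div_iff₀ hπpos]; linarith [hx.2]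
    have hcu : c * (1 / πₙ z.2.2) ≤ 1 := by
      rw [mul_comm, ← le_div_iff₀ hc]; exact h1
    have hcl : c ≤ c * (1 / πₙ z.2.2) := by nlinarith
    rcases hz with h | h <;> rw [h]
    · rw [zero_div, sub_zero, one_pow, le_div_iff₀ (by positivity : (0:ℝ) < c ^ 2)]
      nlinarith
    · rw [le_div_iff₀ (by positivity : (0:ℝ) < c ^ 2)]
      nlinarith [sq_nonneg (c - c * (1 / πₙ z.2.2))]
  have hAle : ∀ᵐ z ∂P₀, ((1 - z.2.1 / πₙ z.2.2) * (m z.2.2 - m₀ z.2.2)) ^ 2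
      ≤ (1 / c ^ 2) * (m z.2.2 - m₀ z.2.2) ^ 2 := by
    filter_upwards [hαb] with z hz
    rw [mul_pow]
    exact mul_le_mul_of_nonneg_right hz (sq_nonneg _)
  have hAint : Integrable
      (fun z : Zsp p => ((1 - z.2.1 / πₙ z.2.2) * (m z.2.2 - m₀ z.2.2)) ^ 2) P₀ := by
    refine (hfsqP.const_mul (1 / c ^ 2)).mono' hAmeas.aestronglyMeasurable ?_
    filter_upwards [hAle] with z hz
    rwa [Real.norm_eq_abs, abs_of_nonneg (sq_nonneg _)]
  have hIA : (∫ z, ((1 - z.2.1 / πₙ z.2.2) * (m z.2.2 - m₀ z.2.2)) ^ 2 ∂P₀)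
      ≤ (1 / c ^ 2) * ∫ z, (m z.2.2 - m₀ z.2.2) ^ 2 ∂P₀ := by
    rw [← integral_const_mul]
    exact integral_mono_ae hAint (hfsqP.const_mul _) hAle
  -- B part
  have hBmeas : Measurable fun z : Zsp p =>
      ((z.2.1 / πₙ z.2.2 - z.2.1 / π₀ z.2.2) * (z.1 - m₀ z.2.2)) ^ 2 :=
    (((hrm.div (hπₙm.comp hxm)).sub (hrm.div (hπ₀m.comp hxm))).mul
      (measurable_fst.sub (hm₀m.comp hxm))).pow_const 2
  have hBeq : (fun z : Zsp p => ((z.2.1 / πₙ z.2.2 - z.2.1 / π₀ z.2.2) * (z.1 - m₀ z.2.2)) ^ 2)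
      =ᵐ[P₀] fun z => z.2.1 * (z.1 - m₀ z.2.2) ^ 2 * g z.2.2 := by
    filter_upwards [hR] with z hz
    rcases hz with h | h <;> rw [h, hg_def] <;> ring
  have hrgP : Integrable (fun z : Zsp p => z.2.1 * g z.2.2) P₀ := by
    refine (integrable_const (1 / c ^ 4 : ℝ)).mono'
      (hrm.mul (hgm.comp hxm)).aestronglyMeasurable ?_
    filter_upwards [hR] with z hz
    rw [Real.norm_eq_abs, abs_mul]
    rcases hz with h | h <;> rw [h]
    · simp; positivity
    · rw [abs_one, one_mul]; exact hgbd z.2.2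
  have hrgnn : 0 ≤ᵐ[P₀] fun z : Zsp p => z.2.1 * g z.2.2 := by
    filter_upwards [hR] with z hz
    rcases hz with h | h <;> rw [h]
    · simp
    · rw [one_mul]; exact hgnn z.2.2
  have hgbound : ∃ M, ∀ x, |g x| ≤ M := ⟨1 / c ^ 4, hgbd⟩
  have hvg := hvar g hgm hgbound
  have hhnn : 0 ≤ᵐ[P₀] fun z : Zsp p => z.2.1 * (z.1 - m₀ z.2.2) ^ 2 * g z.2.2 := by
    filter_upwards [hR] with z hz
    rcases hz with h | h <;> rw [h]
    · simp
    · rw [one_mul]; positivity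
  have hhint : Integrable (fun z : Zsp p => z.2.1 * (z.1 - m₀ z.2.2) ^ 2 * g z.2.2) P₀ := by
    by_cases hI : Integrable (fun z : Zsp p => z.2.1 * (z.1 - m₀ z.2.2) ^ 2 * g z.2.2) P₀
    · exact hI
    · have h0 : (∫ z, z.2.1 * g z.2.2 ∂P₀) = 0 := by
        rw [← hvg, integral_undef hI]
      have hz0 : (fun z : Zsp p => z.2.1 * g z.2.2) =ᵐ[P₀] 0 :=
        (integral_eq_zero_iff_of_nonneg_ae hrgnn hrgP).mp h0
      refine (integrable_zero _ _ _).congr ?_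
      filter_upwards [hz0] with z hz
      show (0 : ℝ) = z.2.1 * (z.1 - m₀ z.2.2) ^ 2 * g z.2.2
      have : z.2.1 * g z.2.2 = 0 := hz
      nlinarith [this]
  have hBint : Integrable
      (fun z : Zsp p => ((z.2.1 / πₙ z.2.2 - z.2.1 / π₀ z.2.2) * (z.1 - m₀ z.2.2)) ^ 2) P₀ :=
    hhint.congr hBeq.symm
  have hrgle : (fun z : Zsp p => z.2.1 * g z.2.2) ≤ᵐ[P₀] fun z => g z.2.2 := by
    filter_upwards [hR] with z hz
    rcases hz with h | h <;> rw [h]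
    · simpa using hgnn z.2.2
    · rw [one_mul]
  have hIB : (∫ z, ((z.2.1 / πₙ z.2.2 - z.2.1 / π₀ z.2.2) * (z.1 - m₀ z.2.2)) ^ 2 ∂P₀)
      ≤ ∫ x, g x ∂(P₀.map fun z : Zsp p => z.2.2) := by
    rw [integral_congr_ae hBeq, hvg, hgeq]
    exact integral_mono_ae hrgP hgP hrgle
  have hgμle : (∫ x, g x ∂(P₀.map fun z : Zsp p => z.2.2))
      ≤ (1 / c ^ 4) * ∫ x, (πₙ x - π₀ x) ^ 2 ∂(P₀.map fun z : Zsp p => z.2.2) := by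
    rw [← integral_const_mul]
    refine integral_mono hgμ (hπsqμ.const_mul _) fun x => ?_
    rw [div_mul_eq_mul_div, one_mul, le_div_iff₀ (by positivity : (0:ℝ) < c ^ 4)]
    exact hgle x
  -- combine
  set Nm := l2norm (P₀.map fun z : Zsp p => z.2.2) (fun x => m x - m₀ x) with hNm_def
  set Nπ := l2norm (P₀.map fun z : Zsp p => z.2.2) (fun x => πₙ x - π₀ x) with hNπ_def
  have hNm0 : 0 ≤ Nm := Real.sqrt_nonneg _
  have hNπ0 : 0 ≤ Nπ := Real.sqrt_nonneg _
  have hNmsq : Nm ^ 2 = ∫ x, (m x - m₀ x) ^ 2 ∂(P₀.map fun z : Zsp p => z.2.2) := by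
    rw [hNm_def, l2norm, Real.sq_sqrt (integral_nonneg fun x => sq_nonneg _)]
  have hNπsq : Nπ ^ 2 = ∫ x, (πₙ x - π₀ x) ^ 2 ∂(P₀.map fun z : Zsp p => z.2.2) := by
    rw [hNπ_def, l2norm, Real.sq_sqrt (integral_nonneg fun x => sq_nonneg _)]
  set IA := ∫ z, ((1 - z.2.1 / πₙ z.2.2) * (m z.2.2 - m₀ z.2.2)) ^ 2 ∂P₀ with hIA_def
  set IB := ∫ z, ((z.2.1 / πₙ z.2.2 - z.2.1 / π₀ z.2.2) * (z.1 - m₀ z.2.2)) ^ 2 ∂P₀ with hIB_def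
  have hIA0 : 0 ≤ IA := integral_nonneg fun z => sq_nonneg _
  have hIB0 : 0 ≤ IB := integral_nonneg fun z => sq_nonneg _
  have hIAle : IA * c ^ 2 ≤ Nm ^ 2 := by
    rw [hNmsq, hImeq]
    have this := hIA
    calc IA * c ^ 2 ≤ ((1 / c ^ 2) * ∫ z, (m z.2.2 - m₀ z.2.2) ^ 2 ∂P₀) * c ^ 2 :=
          mul_le_mul_of_nonneg_right this (by positivity)
      _ = ∫ z, (m z.2.2 - m₀ z.2.2) ^ 2 ∂P₀ := by field_simp
  have hIBle : IB * c ^ 4 ≤ Nπ ^ 2 := by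
    rw [hNπsq]
    have h2 := le_trans hIB hgμle
    calc IB * c ^ 4
        ≤ ((1 / c ^ 4) * ∫ x, (πₙ x - π₀ x) ^ 2 ∂(P₀.map fun z : Zsp p => z.2.2)) * c ^ 4 :=
          mul_le_mul_of_nonneg_right h2 (by positivity)
      _ = ∫ x, (πₙ x - π₀ x) ^ 2 ∂(P₀.map fun z : Zsp p => z.2.2) := by field_simp
  -- the sum bound
  have hsum_le : ∀ z : Zsp p,
      ((1 - z.2.1 / πₙ z.2.2) * (m z.2.2 - m₀ z.2.2)
        + (z.2.1 / πₙ z.2.2 - z.2.1 / π₀ z.2.2) * (z.1 - m₀ z.2.2)) ^ 2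
      ≤ 2 * ((1 - z.2.1 / πₙ z.2.2) * (m z.2.2 - m₀ z.2.2)) ^ 2
        + 2 * ((z.2.1 / πₙ z.2.2 - z.2.1 / π₀ z.2.2) * (z.1 - m₀ z.2.2)) ^ 2 := by
    have habc : ∀ a b : ℝ, (a + b) ^ 2 ≤ 2 * a ^ 2 + 2 * b ^ 2 := fun a b => by
      nlinarith [sq_nonneg (a - b)]
    exact fun z => habc _ _
  have hSmeas : Measurable fun z : Zsp p =>
      ((1 - z.2.1 / πₙ z.2.2) * (m z.2.2 - m₀ z.2.2)
        + (z.2.1 / πₙ z.2.2 - z.2.1 / π₀ z.2.2) * (z.1 - m₀ z.2.2)) ^ 2 :=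
    (((measurable_const.sub (hrm.div (hπₙm.comp hxm))).mul (hfmm.comp hxm)).add
      (((hrm.div (hπₙm.comp hxm)).sub (hrm.div (hπ₀m.comp hxm))).mul
        (measurable_fst.sub (hm₀m.comp hxm)))).pow_const 2
  have hSint : Integrable (fun z : Zsp p =>
      ((1 - z.2.1 / πₙ z.2.2) * (m z.2.2 - m₀ z.2.2)
        + (z.2.1 / πₙ z.2.2 - z.2.1 / π₀ z.2.2) * (z.1 - m₀ z.2.2)) ^ 2) P₀ := by
    refine ((hAint.const_mul 2).add (hBint.const_mul 2)).mono' hSmeas.aestronglyMeasurable ?_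
    refine Filter.Eventually.of_forall fun z => ?_
    rw [Real.norm_eq_abs, abs_of_nonneg (sq_nonneg _)]
    exact hsum_le z
  have hS : (∫ z, ((1 - z.2.1 / πₙ z.2.2) * (m z.2.2 - m₀ z.2.2)
      + (z.2.1 / πₙ z.2.2 - z.2.1 / π₀ z.2.2) * (z.1 - m₀ z.2.2)) ^ 2 ∂P₀)
      ≤ 2 * IA + 2 * IB := by
    rw [hIA_def, hIB_def, ← integral_const_mul, ← integral_const_mul, ← integral_add
      (hAint.const_mul 2) (hBint.const_mul 2)]
    exact integral_mono hSint ((hAint.const_mul 2).add (hBint.const_mul 2)) hsum_le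
  -- final numeric bound
  set S := ∫ z, ((1 - z.2.1 / πₙ z.2.2) * (m z.2.2 - m₀ z.2.2)
      + (z.2.1 / πₙ z.2.2 - z.2.1 / π₀ z.2.2) * (z.1 - m₀ z.2.2)) ^ 2 ∂P₀ with hS_def
  have hT0 : 0 ≤ Nm + Nπ + Nm * Nπ := by positivity
  have hgoal : S ≤ (2 / c ^ 4 * (Nm + Nπ + Nm * Nπ)) ^ 2 := by
    rw [mul_pow, div_pow, div_mul_eq_mul_div, le_div_iff₀ (by positivity : (0:ℝ) < (c ^ 4) ^ 2)]
    have hc6 : c ^ 6 ≤ 1 := pow_le_one₀ (n := 6) hc.le hc1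
    have hc4' : c ^ 4 ≤ 1 := pow_le_one₀ (n := 4) hc.le hc1
    have hIA8 : IA * (c ^ 4) ^ 2 ≤ Nm ^ 2 := by
      calc IA * (c ^ 4) ^ 2 = IA * c ^ 2 * c ^ 6 := by ring
        _ ≤ Nm ^ 2 * c ^ 6 := mul_le_mul_of_nonneg_right hIAle (by positivity)
        _ ≤ Nm ^ 2 * 1 := mul_le_mul_of_nonneg_left hc6 (sq_nonneg _)
        _ = Nm ^ 2 := mul_one _
    have hIB8 : IB * (c ^ 4) ^ 2 ≤ Nπ ^ 2 := by
      calc IB * (c ^ 4) ^ 2 = IB * c ^ 4 * c ^ 4 := by ring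
        _ ≤ Nπ ^ 2 * c ^ 4 := mul_le_mul_of_nonneg_right hIBle (by positivity)
        _ ≤ Nπ ^ 2 * 1 := mul_le_mul_of_nonneg_left hc4' (sq_nonneg _)
        _ = Nπ ^ 2 := mul_one _
    have haux : ∀ a b : ℝ, 0 ≤ a → 0 ≤ b →
        2 * a ^ 2 + 2 * b ^ 2 ≤ 2 ^ 2 * (a + b + a * b) ^ 2 := by
      intro a b ha hb
      nlinarith [sq_nonneg (a - b), mul_nonneg ha hb, sq_nonneg (a * b),
        mul_nonneg (mul_nonneg ha hb) (add_nonneg ha hb)]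
    calc S * (c ^ 4) ^ 2 ≤ (2 * IA + 2 * IB) * (c ^ 4) ^ 2 :=
          mul_le_mul_of_nonneg_right hS (sq_nonneg _)
      _ = 2 * (IA * (c ^ 4) ^ 2) + 2 * (IB * (c ^ 4) ^ 2) := by ring
      _ ≤ 2 * Nm ^ 2 + 2 * Nπ ^ 2 := by linarith
      _ ≤ 2 ^ 2 * (Nm + Nπ + Nm * Nπ) ^ 2 := haux _ _ hNm0 hNπ0
  calc Real.sqrt S ≤ Real.sqrt ((2 / c ^ 4 * (Nm + Nπ + Nm * Nπ)) ^ 2) :=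
        Real.sqrt_le_sqrt hgoal
    _ = 2 / c ^ 4 * (Nm + Nπ + Nm * Nπ) := by
        rw [Real.sqrt_sq (by positivity)]
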